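/- arXiv:1912.10324 — 2 statements merged into one kernel-verified Lean document; each statement's English description precedes it below -/
import Mathlib

section
/- Let n, k, r be integers with r ≥ 1, k ≥ 1 and 2k ≤ n. Let 𝒜_0 ⊆ 𝒮_{n,k,r} be an intersecting family such that no member of 𝒜_0 contains a pair with first coordinate 1. Let ℳ_0 = {M_A : A ∈ 𝒜_0} be the family of supports (so each M ∈ ℳ_0 is a k-subset of [2, n] = {2, …, n}), let 𝒩 = {[2, n] \ M : M ∈ ℳ_0}, and let ∂_{k−1}(𝒩) be the (k−1)-shadow of 𝒩. Then |𝒜_0| ≤ r^(k−1) · |∂_{k−1}(𝒩)|. -/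
/-!
Group the members of `𝒜₀` by their support `M`. Two members with the same support share a pair,
so their sign vectors, read in `ℤ/r` and normalised to vanish at a fixed point of `M`, coincide;
hence each fibre has at most `r^(k-1)` members.

The supports form an intersecting `k`-uniform family on the `(n-1)`-set `[2, n]`. If `n > 2k`,
Erdős–Ko–Rado bounds their number by `C(n-2, k-1) = C(n-2, n-1-k)`, and by Kruskal–Katona the
`(k-1)`-shadow of the complements is at least that of an initial colex segment of the same size.
Such a segment lives on the first `n-2` points, where the levels `n-1-k` and `k-1` have the same
size, so the local LYM inequality shows that its shadow is no smaller than the segment itself.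
If `n = 2k`, the complements already have size `k-1`.
-/

open Finset

/-- The family of `r`-signed `k`-sets on `[n] = {1, …, n}`. -/
def signedSets (n k r : ℕ) : Finset (Finset (ℕ × ℕ)) :=
  ((Finset.Icc 1 n ×ˢ Finset.Icc 1 r).powerset).filter
    (fun A => A.card = k ∧ (A.image Prod.fst).card = k)

/-- The `m`-shadow of a family `𝒩`: all `m`-element sets contained in some member of `𝒩`. -/
def mShadow (m : ℕ) (𝒩 : Finset (Finset ℕ)) : Finset (Finset ℕ) :=
  𝒩.sup (fun F => F.powersetCard m)

open scoped FinsetFamily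
open Finset.Colex

namespace Finset

variable {α β : Type*} [DecidableEq α]

lemma map_preimage_of_subset_range (e : β ↪ α) {s : Finset α} (hs : ↑s ⊆ Set.range e) :
    (s.preimage e e.injective.injOn).map e = s := by
  classical
  rw [map_eq_image, image_preimage, filter_true_of_mem fun x hx => hs hx]

lemma sdiff_map_eq_map_compl [Fintype β] [DecidableEq β] (e : β ↪ α) {U : Finset α}
    (hU : Set.range e = U) (s : Finset β) : U \ s.map e = sᶜ.map e := by
  ext x
  constructor
  · intro hx
    obtain ⟨b, rfl⟩ : x ∈ Set.range e := hU ▸ (mem_sdiff.1 hx).1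
    simpa using (mem_sdiff.1 hx).2
  · rintro hx
    obtain ⟨b, hb, rfl⟩ := mem_map.1 hx
    exact mem_sdiff.2 ⟨mem_coe.1 (hU ▸ Set.mem_range_self b), by simpa using hb⟩

lemma falling_map [DecidableEq β] (e : β ↪ α) (c : ℕ) (𝒜 : Finset (Finset β)) :
    falling c (𝒜.map (mapEmbedding e).toEmbedding) =
      (falling c 𝒜).map (mapEmbedding e).toEmbedding := by
  ext s
  simp only [mem_falling, mem_map, RelEmbedding.coe_toEmbedding, mapEmbedding_apply]
  constructor
  · rintro ⟨⟨_, ⟨t, ht, rfl⟩, hst⟩, rfl⟩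
    obtain ⟨u, hut, rfl⟩ := subset_map_iff.1 hst
    exact ⟨u, ⟨⟨t, ht, hut⟩, (card_map _).symm⟩, rfl⟩
  · rintro ⟨u, ⟨⟨t, ht, hut⟩, rfl⟩, rfl⟩
    exact ⟨⟨t.map e, ⟨t, ht, rfl⟩, map_subset_map.2 hut⟩, card_map _⟩

lemma falling_eq_shadow_iterate {𝒜 : Finset (Finset α)} {s c : ℕ}
    (h𝒜 : (𝒜 : Set (Finset α)).Sized s) (hcs : c ≤ s) : falling c 𝒜 = ∂^[s - c] 𝒜 := by
  ext t
  rw [mem_falling, mem_shadow_iterate_iff_exists_mem_card_add]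
  constructor
  · rintro ⟨⟨u, hu, htu⟩, rfl⟩
    exact ⟨u, hu, htu, by rw [h𝒜 hu]; omega⟩
  · rintro ⟨u, hu, htu, hcard⟩
    rw [h𝒜 hu] at hcard
    exact ⟨⟨u, hu, htu⟩, by omega⟩

lemma card_le_card_falling_of_sized [Fintype α] {ℬ : Finset (Finset α)} {b c : ℕ}
    (hℬ : (ℬ : Set (Finset α)).Sized b) (hα : Fintype.card α = b + c) (hcb : c ≤ b) :
    #ℬ ≤ #(falling c ℬ) := by
  have hlym := le_card_falling_div_choose (𝕜 := ℚ) (k := b) (by omega) hℬ.isAntichain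
  rw [hα, Nat.add_sub_cancel_left] at hlym
  have hslice : ℬ # b = ℬ := filter_true_of_mem fun _ hA => hℬ hA
  have hterm : (#ℬ : ℚ) / (b + c).choose b ≤
      ∑ i ∈ range (b + 1), (#(ℬ # (b + c - i)) : ℚ) / (b + c).choose (b + c - i) := by
    refine le_trans ?_ (single_le_sum (fun _ _ => by positivity)
      (mem_range.2 (by omega : c < b + 1)))
    rw [Nat.add_sub_cancel, hslice]
  rw [Nat.choose_symm_add] at hterm
  have hpos : (0 : ℚ) < (b + c).choose c := by exact_mod_cast Nat.choose_pos (by omega)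
  exact_mod_cast (div_le_div_iff_of_pos_right hpos).1 (hterm.trans hlym)

lemma exists_subset_card_eq_forall_le_mem {γ : Type*} [LinearOrder γ] (T : Finset γ) {c : ℕ}
    (hc : c ≤ #T) : ∃ S ⊆ T, #S = c ∧ ∀ x ∈ S, ∀ y ∈ T, y ≤ x → y ∈ S := by
  set f := T.orderEmbOfFin rfl
  refine ⟨univ.map ((Fin.castLEEmb hc).trans f.toEmbedding), ?_, by simp, ?_⟩
  · intro _ hx
    obtain ⟨i, -, rfl⟩ := mem_map.1 hx
    exact orderEmbOfFin_mem T rfl _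
  · intro _ hx y hy hyx
    obtain ⟨i, -, rfl⟩ := mem_map.1 hx
    obtain ⟨j, rfl⟩ : y ∈ Set.range f := by rw [range_orderEmbOfFin]; exact hy
    have hji : j ≤ Fin.castLE hc i := f.le_iff_le.1 hyx
    exact mem_map.2 ⟨⟨j, by simp [Fin.le_def] at hji; omega⟩, mem_univ _, rfl⟩

lemma exists_isInitSeg_card_eq {n s t : ℕ} (ht : t ≤ n.choose s) :
    ∃ 𝒞 : Finset (Finset (Fin n)), IsInitSeg 𝒞 s ∧ #𝒞 = t := by
  obtain ⟨S, hST, hS, hdown⟩ := exists_subset_card_eq_forall_le_mem (c := t)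
    ((powersetCard s (univ : Finset (Fin n))).map toColex.toEmbedding) (by simpa using ht)
  refine ⟨S.map ofColex.toEmbedding, ⟨?_, ?_⟩, by simpa using hS⟩
  · intro _ hA
    obtain ⟨A, hAS, rfl⟩ := mem_map.1 hA
    obtain ⟨A, hA', rfl⟩ := mem_map.1 (hST hAS)
    exact (mem_powersetCard.1 hA').2
  · intro _ B hA ⟨hBA, hB⟩
    obtain ⟨A, hAS, rfl⟩ := mem_map.1 hA
    refine mem_map.2 ⟨toColex B, hdown A hAS _ ?_ hBA.le, rfl⟩
    exact mem_map_of_mem _ (mem_powersetCard.2 ⟨subset_univ _, hB⟩)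

lemma Colex.IsInitSeg.map_castSucc {n s : ℕ} {𝒞 : Finset (Finset (Fin n))}
    (h𝒞 : IsInitSeg 𝒞 s) : IsInitSeg (𝒞.map (mapEmbedding Fin.castSuccEmb).toEmbedding) s := by
  refine ⟨?_, ?_⟩
  · intro _ hA
    obtain ⟨A, hA𝒞, rfl⟩ := mem_map.1 hA
    simpa using h𝒞.1 hA𝒞
  · intro _ B hA ⟨hBA, hB⟩
    obtain ⟨A, hA𝒞, rfl⟩ := mem_map.1 hA
    have hlt : ∀ b ∈ B, b < Fin.last n :=
      Colex.forall_lt_mono hBA.le (by simp [Fin.castSucc_lt_last])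
    obtain ⟨B, rfl⟩ : ∃ B₀ : Finset (Fin n), B₀.map Fin.castSuccEmb = B :=
      ⟨_, map_preimage_of_subset_range _ fun b hb =>
        ⟨b.castPred (hlt b hb).ne, Fin.castSucc_castPred _ _⟩⟩
    refine mem_map_of_mem _ (h𝒞.2 hA𝒞 ⟨?_, by simpa using hB⟩)
    simpa [map_eq_image, toColex_image_lt_toColex_image Fin.strictMono_castSucc] using hBA

lemma card_le_card_falling_of_card_le_choose {s c : ℕ} (hcs : c ≤ s)
    {𝒩 : Finset (Finset (Fin (s + c + 1)))} (h𝒩 : (𝒩 : Set (Finset (Fin (s + c + 1)))).Sized s)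
    (hcard : #𝒩 ≤ (s + c).choose s) : #𝒩 ≤ #(falling c 𝒩) := by
  obtain ⟨𝒞, h𝒞, h𝒞card⟩ := exists_isInitSeg_card_eq hcard
  have h𝒞' := h𝒞.map_castSucc
  calc #𝒩 = #𝒞 := h𝒞card.symm
    _ ≤ #(falling c 𝒞) := card_le_card_falling_of_sized h𝒞.1 (Fintype.card_fin _) hcs
    _ = #(∂^[s - c] (𝒞.map (mapEmbedding Fin.castSuccEmb).toEmbedding)) := by
      rw [← falling_eq_shadow_iterate h𝒞'.1 hcs, falling_map, card_map]
    _ ≤ #(∂^[s - c] 𝒩) := iterated_kk h𝒩 (by rw [card_map, h𝒞card]) h𝒞'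
    _ = #(falling c 𝒩) := by rw [falling_eq_shadow_iterate h𝒩 hcs]

lemma card_le_card_falling_compls {m k : ℕ} {ℳ : Finset (Finset (Fin m))}
    (hℳ : (ℳ : Set (Finset (Fin m))).Sized k) (hint : (ℳ : Set (Finset (Fin m))).Intersecting)
    (hk : 1 ≤ k) (hkm : 2 * k ≤ m + 1) : #ℳ ≤ #(falling (k - 1) ℳᶜˢ) := by
  obtain ⟨s, rfl⟩ : ∃ s, m = s + (k - 1) + 1 := ⟨m - k, by omega⟩
  have hcompl : ((ℳᶜˢ : Finset _) : Set (Finset (Fin (s + (k - 1) + 1)))).Sized s := by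
    intro A hA
    have h := hℳ (mem_compls.1 hA)
    rw [card_compl, Fintype.card_fin] at h
    have := card_le_univ A
    simp only [Fintype.card_fin] at this
    omega
  rcases (show k - 1 ≤ s by omega).eq_or_lt with hs | hs
  · subst hs
    rw [falling_eq_shadow_iterate hcompl le_rfl, Nat.sub_self, Function.iterate_zero, id,
      card_compls]
  · refine (card_compls ℳ).symm.le.trans (card_le_card_falling_of_card_le_choose hs.le hcompl ?_)
    rw [card_compls, Nat.choose_symm_add]
    simpa using erdos_ko_rado hint hℳ (by omega)

lemma card_le_card_falling_sdiff {U : Finset α} {k : ℕ} {ℳ : Finset (Finset α)}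
    (hℳU : ∀ M ∈ ℳ, M ⊆ U) (hℳ : (ℳ : Set (Finset α)).Sized k)
    (hint : (ℳ : Set (Finset α)).Intersecting) (hk : 1 ≤ k) (hkU : 2 * k ≤ #U + 1) :
    #ℳ ≤ #(falling (k - 1) (ℳ.image (U \ ·))) := by
  set e : Fin #U ↪ α := U.equivFin.symm.toEmbedding.trans (Function.Embedding.subtype (· ∈ U))
  have he : Set.range e = U := by
    ext x
    exact ⟨fun ⟨y, hy⟩ => hy ▸ (U.equivFin.symm y).2, fun hx => ⟨U.equivFin ⟨x, hx⟩, by simp [e]⟩⟩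
  set E := (mapEmbedding e).toEmbedding
  obtain ⟨ℳ, rfl⟩ : ∃ ℳ' : Finset (Finset (Fin #U)), ℳ'.map E = ℳ := by
    refine ⟨ℳ.image fun M => M.preimage e e.injective.injOn, ?_⟩
    rw [map_eq_image, image_image]
    conv_rhs => rw [← image_id (s := ℳ)]
    exact image_congr fun M hM => map_preimage_of_subset_range e (he ▸ coe_subset.2 (hℳU M hM))
  have hsdiff : (ℳ.map E).image (U \ ·) = ℳᶜˢ.map E := by
    ext; simp [E, compls, sdiff_map_eq_map_compl e he]
  rw [hsdiff, falling_map, card_map, card_map]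
  refine card_le_card_falling_compls (fun M hM => ?_) (fun M hM N hN hMN => ?_) hk hkU
  · simpa [E] using hℳ (mem_map_of_mem E hM)
  · exact hint (mem_map_of_mem E hM) (mem_map_of_mem E hN) (by simpa [E] using hMN)

end Finset

lemma ZMod.natCast_injOn_Icc (r : ℕ) : Set.InjOn (Nat.cast : ℕ → ZMod r) (Set.Icc 1 r) := by
  rintro a ⟨ha, har⟩ b ⟨hb, hbr⟩ h
  rw [ZMod.natCast_eq_natCast_iff'] at h
  rcases har.lt_or_eq with har | rfl <;> rcases hbr.lt_or_eq with hbr | rfl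
  · rwa [Nat.mod_eq_of_lt har, Nat.mod_eq_of_lt hbr] at h
  · rw [Nat.mod_eq_of_lt har, Nat.mod_self] at h
    omega
  · rw [Nat.mod_self, Nat.mod_eq_of_lt hbr] at h
    omega
  · rfl

lemma Finset.sum_filter_fst_eq_of_injOn {α β M : Type*} [DecidableEq α] [AddCommMonoid M]
    {A : Finset (α × β)} (hA : Set.InjOn Prod.fst (A : Set (α × β))) (f : β → M) {p : α × β}
    (hp : p ∈ A) :
    ∑ q ∈ A with q.1 = p.1, f q.2 = f p.2 :=
  sum_eq_single_of_mem p (mem_filter.2 ⟨hp, rfl⟩) fun _ hq hqp =>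
    (hqp (hA (mem_filter.1 hq).1 hp (mem_filter.1 hq).2)).elim

lemma card_le_pow_of_forall_exists_eq {ι G : Type*} [Fintype ι] [DecidableEq ι] [AddCommGroup G]
    [Fintype G] {F : Finset (ι → G)} (hF : ∀ σ ∈ F, ∀ τ ∈ F, ∃ i, σ i = τ i) :
    #F ≤ Fintype.card G ^ (Fintype.card ι - 1) := by
  rcases isEmpty_or_nonempty ι with hι | ⟨⟨i₀⟩⟩
  · rw [eq_empty_of_forall_notMem fun σ hσ => isEmptyElim (hF σ hσ σ hσ).choose]
    simp
  let Φ : (ι → G) → ({i // i ≠ i₀} → G) := fun σ i => σ i - σ i₀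
  have hΦ : Set.InjOn Φ F := by
    intro σ hσ τ hτ h
    have hdiff : ∀ i, σ i - τ i = σ i₀ - τ i₀ := by
      intro i
      by_cases hi : i = i₀
      · rw [hi]
      · exact sub_eq_sub_iff_sub_eq_sub.1 (congrFun h ⟨i, hi⟩)
    obtain ⟨j, hj⟩ := hF σ hσ τ hτ
    funext i
    rw [← sub_eq_zero, hdiff i, ← hdiff j, hj, sub_self]
  calc #F ≤ #(univ : Finset ({i // i ≠ i₀} → G)) :=
        card_le_card_of_injOn Φ (fun _ _ => mem_univ _) hΦ
    _ = Fintype.card G ^ (Fintype.card ι - 1) := by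
      rw [card_univ, Fintype.card_fun, Fintype.card_subtype_compl, Fintype.card_subtype_eq]

lemma card_le_pow_of_image_fst_eq {α : Type*} [DecidableEq α] {r : ℕ} [NeZero r]
    {𝒜 : Finset (Finset (α × ℕ))} {M : Finset α}
    (hsign : ∀ A ∈ 𝒜, ∀ p ∈ A, p.2 ∈ Set.Icc 1 r)
    (hinj : ∀ A ∈ 𝒜, Set.InjOn Prod.fst (A : Set (α × ℕ)))
    (hsupp : ∀ A ∈ 𝒜, A.image Prod.fst = M) (hint : ∀ A ∈ 𝒜, ∀ B ∈ 𝒜, (A ∩ B).Nonempty) :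
    #𝒜 ≤ r ^ (#M - 1) := by
  let sign : Finset (α × ℕ) → M → ZMod r := fun A x => ∑ p ∈ A with p.1 = x.1, (p.2 : ZMod r)
  have hmem : ∀ A ∈ 𝒜, ∀ p ∈ A, p.1 ∈ M := fun A hA p hp => hsupp A hA ▸ mem_image_of_mem _ hp
  have hsign_eq : ∀ A ∈ 𝒜, ∀ p ∈ A, ∀ x : M, p.1 = x.1 → sign A x = p.2 := by
    intro A hA p hp x hx
    simp only [sign, ← hx]
    exact sum_filter_fst_eq_of_injOn (hinj A hA) _ hp
  have hsub : ∀ A ∈ 𝒜, ∀ B ∈ 𝒜, sign A = sign B → A ⊆ B := by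
    intro A hA B hB h p hp
    obtain ⟨q, hq, hqp⟩ := mem_image.1 ((hsupp B hB).symm ▸ hmem A hA p hp)
    have hpq := congrFun h ⟨p.1, hmem A hA p hp⟩
    rw [hsign_eq A hA p hp _ rfl, hsign_eq B hB q hq _ hqp] at hpq
    rwa [Prod.ext hqp.symm (ZMod.natCast_injOn_Icc r (hsign A hA p hp) (hsign B hB q hq) hpq)]
  have hsign_inj : Set.InjOn sign 𝒜 := fun A hA B hB h =>
    (hsub A hA B hB h).antisymm (hsub B hB A hA h.symm)
  have hagree : ∀ σ ∈ 𝒜.image sign, ∀ τ ∈ 𝒜.image sign, ∃ x, σ x = τ x := by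
    simp only [mem_image]
    rintro _ ⟨A, hA, rfl⟩ _ ⟨B, hB, rfl⟩
    obtain ⟨p, hp⟩ := hint A hA B hB
    obtain ⟨hpA, hpB⟩ := mem_inter.1 hp
    exact ⟨⟨p.1, hmem A hA p hpA⟩, by rw [hsign_eq A hA p hpA _ rfl, hsign_eq B hB p hpB _ rfl]⟩
  calc #𝒜 = #(𝒜.image sign) := (card_image_of_injOn hsign_inj).symm
    _ ≤ Fintype.card (ZMod r) ^ (Fintype.card M - 1) := card_le_pow_of_forall_exists_eq hagree
    _ = r ^ (#M - 1) := by rw [ZMod.card, Fintype.card_coe]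

lemma card_le_pow_mul_card_image_image_fst {α : Type*} [DecidableEq α] {r k : ℕ} [NeZero r]
    {𝒜 : Finset (Finset (α × ℕ))} (hsign : ∀ A ∈ 𝒜, ∀ p ∈ A, p.2 ∈ Set.Icc 1 r)
    (hinj : ∀ A ∈ 𝒜, Set.InjOn Prod.fst (A : Set (α × ℕ))) (hcard : ∀ A ∈ 𝒜, #A = k)
    (hint : ∀ A ∈ 𝒜, ∀ B ∈ 𝒜, (A ∩ B).Nonempty) :
    #𝒜 ≤ r ^ (k - 1) * #(𝒜.image fun A => A.image Prod.fst) := by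
  refine card_le_mul_card_image _ _ fun M hM => ?_
  obtain ⟨A, hA, rfl⟩ := mem_image.1 hM
  rw [← hcard A hA, ← card_image_of_injOn (hinj A hA)]
  exact card_le_pow_of_image_fst_eq (fun B hB => hsign B (mem_filter.1 hB).1)
    (fun B hB => hinj B (mem_filter.1 hB).1) (fun B hB => (mem_filter.1 hB).2)
    (fun B hB C hC => hint B (mem_filter.1 hB).1 C (mem_filter.1 hC).1)

lemma intersecting_image_image_fst {α β : Type*} [DecidableEq α] [DecidableEq β]
    {𝒜 : Finset (Finset (α × β))} (hint : ∀ A ∈ 𝒜, ∀ B ∈ 𝒜, (A ∩ B).Nonempty) :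
    ((𝒜.image fun A => A.image Prod.fst : Finset (Finset α)) : Set (Finset α)).Intersecting := by
  simp only [Set.Intersecting, coe_image, Set.forall_mem_image]
  exact fun A hA B hB => not_disjoint_iff_nonempty_inter.2
    (((hint A hA B hB).image _).mono (image_inter_subset _ _ _))

lemma mShadow_eq_falling (m : ℕ) (𝒩 : Finset (Finset ℕ)) : mShadow m 𝒩 = falling m 𝒩 := rfl

lemma mem_signedSets {n k r : ℕ} {A : Finset (ℕ × ℕ)} :
    A ∈ signedSets n k r ↔ A ⊆ Icc 1 n ×ˢ Icc 1 r ∧ #A = k ∧ #(A.image Prod.fst) = k := by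
  simp [signedSets]

theorem signed_avoiding_one_bound (n k r : ℕ) (hr : 1 ≤ r) (hk : 1 ≤ k) (hkn : 2 * k ≤ n)
    (𝒜₀ : Finset (Finset (ℕ × ℕ))) (h𝒜₀ : 𝒜₀ ⊆ signedSets n k r)
    (hint : ∀ A ∈ 𝒜₀, ∀ B ∈ 𝒜₀, (A ∩ B).Nonempty)
    (h1 : ∀ A ∈ 𝒜₀, ∀ p ∈ A, p.1 ≠ 1) :
    𝒜₀.card ≤ r ^ (k - 1) *
      (mShadow (k - 1)
        ((𝒜₀.image (fun A => A.image Prod.fst)).image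
          (fun M => Finset.Icc 2 n \ M))).card := by
  have : NeZero r := ⟨by omega⟩
  rw [mShadow_eq_falling]
  have hsigned A (hA : A ∈ 𝒜₀) := mem_signedSets.1 (h𝒜₀ hA)
  have hmem : ∀ A ∈ 𝒜₀, ∀ p ∈ A, p.1 ∈ Icc 2 n ∧ p.2 ∈ Set.Icc 1 r := by
    intro A hA p hp
    have hp₁ := h1 A hA p hp
    have hp := mem_product.1 ((hsigned A hA).1 hp)
    simp only [mem_Icc, Set.mem_Icc] at hp ⊢
    omega
  have hinj A (hA : A ∈ 𝒜₀) : Set.InjOn Prod.fst (A : Set (ℕ × ℕ)) :=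
    card_image_iff.1 ((hsigned A hA).2.2.trans (hsigned A hA).2.1.symm)
  set ℳ := 𝒜₀.image fun A => A.image Prod.fst
  have hℳU : ∀ M ∈ ℳ, M ⊆ Icc 2 n := by
    simp only [ℳ, forall_mem_image, image_subset_iff]
    exact fun A hA p hp => (hmem A hA p hp).1
  have hℳ : (ℳ : Set (Finset ℕ)).Sized k := by
    simpa [Set.Sized, ℳ] using fun A hA => (hsigned A hA).2.2
  calc #𝒜₀ ≤ r ^ (k - 1) * #ℳ := card_le_pow_mul_card_image_image_fst
        (fun A hA p hp => (hmem A hA p hp).2) hinj (fun A hA => (hsigned A hA).2.1) hint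
    _ ≤ r ^ (k - 1) * #(falling (k - 1) (ℳ.image (Icc 2 n \ ·))) := by
      refine Nat.mul_le_mul_left _ (card_le_card_falling_sdiff hℳU hℳ ?_ hk ?_)
      · exact intersecting_image_image_fst hint
      · rw [Nat.card_Icc]
        omega
end

section
/- Let n, k, r be integers with r ≥ 2, k ≥ 1 and 2k ≤ n, and let 𝒜 ⊆ 𝒮_{n,k,r} be an intersecting family. Let 𝒜_0 = {A ∈ 𝒜 : A contains no pair with first coordinate 1}, and for i ∈ [r] let 𝒜′_i = {A \ {(1, i)} : A ∈ 𝒜, (1, i) ∈ A}. Let ℳ_0 = {M_A : A ∈ 𝒜_0} be the family of supports of members of 𝒜_0 (k-subsets of [2, n]), let 𝒩 = {[2, n] \ M : M ∈ ℳ_0}, and let ℬ = {{(x_1, a_1), …, (x_{k−1}, a_{k−1})} : {x_1, …, x_{k−1}} ∈ ∂_{k−1}(𝒩), a_1, …, a_{k−1} ∈ [r]}. Then the families 𝒜′_1, θ^1_r(𝒜′_2), …, θ^{r−1}_r(𝒜′_r), ℬ are pairwise disjoint. -/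
open Finset

/-- `mod*`: the modulo operation with representatives in `{1, …, r}`,
so multiples of `r` map to `r` instead of `0`. -/
def modStar (x : ℤ) (r : ℕ) : ℕ :=
  if (r : ℤ) ∣ x then r else (x % (r : ℤ)).toNat

/-- The shift `θ^q_r(A) = {(x, (a + q) mod* r) : (x, a) ∈ A}`. -/
def theta (q : ℤ) (r : ℕ) (A : Finset (ℕ × ℕ)) : Finset (ℕ × ℕ) :=
  A.image (fun p => (p.1, modStar ((p.2 : ℤ) + q) r))

/-- `𝒜′_i = {A \ {(1, i)} : A ∈ 𝒜, (1, i) ∈ A}`. -/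
def primeFam (𝒜 : Finset (Finset (ℕ × ℕ))) (i : ℕ) : Finset (Finset (ℕ × ℕ)) :=
  (𝒜.filter (fun A => (1, i) ∈ A)).image (fun A => A.erase (1, i))

/-- The `i`-th family in the list `𝒜′_1, θ^1_r(𝒜′_2), …, θ^{r−1}_r(𝒜′_r)`:
`𝒜′_1` itself for `i = 1`, and `θ^{i−1}_r(𝒜′_i)` for `i ≥ 2`. -/
def shiftedFam (𝒜 : Finset (Finset (ℕ × ℕ))) (r i : ℕ) : Finset (Finset (ℕ × ℕ)) :=
  if i = 1 then primeFam 𝒜 1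
  else (primeFam 𝒜 i).image (fun A => theta ((i : ℤ) - 1) r A)

/-- `𝒜₀`: the members of `𝒜` containing no pair with first coordinate `1`. -/
def zeroFam (𝒜 : Finset (Finset (ℕ × ℕ))) : Finset (Finset (ℕ × ℕ)) :=
  𝒜.filter (fun A => ∀ p ∈ A, p.1 ≠ 1)

/-- `𝒩 = {[2, n] \ M : M ∈ ℳ₀}` where `ℳ₀` is the family of supports of members of `𝒜₀`. -/
def complFam (n : ℕ) (𝒜 : Finset (Finset (ℕ × ℕ))) : Finset (Finset ℕ) :=
  ((zeroFam 𝒜).image (fun A => A.image Prod.fst)).image (fun M => Finset.Icc 2 n \ M)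

/-- `ℬ`: all `r`-signed `(k−1)`-sets whose support lies in the `(k−1)`-shadow of `𝒩`. -/
def bFam (n k r : ℕ) (𝒜 : Finset (Finset (ℕ × ℕ))) : Finset (Finset (ℕ × ℕ)) :=
  (signedSets n (k - 1) r).filter
    (fun B => B.image Prod.fst ∈ mShadow (k - 1) (complFam n 𝒜))

/-! Two members `A ∋ (1, i)` and `B ∋ (1, j)` of `𝒜` with `i ≠ j` meet in a pair `p` off the first
coordinate, since signed sets have injective supports. If `θ^{i-1}(A \ {(1, i)})` equals
`θ^{j-1}(B \ {(1, j)})`, the sign of `p` is shifted by `i - 1` and by `j - 1` to the same value, so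
`i ≡ j (mod r)`. A member of `ℬ` has support disjoint from that of some `A₀ ∈ 𝒜₀`, whereas shifting
preserves supports and `A` meets `A₀` off the first coordinate. -/

lemma modStar_emod {r : ℕ} (hr : 0 < r) (x : ℤ) : (modStar x r : ℤ) % r = x % r := by
  unfold modStar
  split_ifs with h
  · simp [Int.emod_eq_zero_of_dvd h]
  · rw [Int.toNat_of_nonneg (Int.emod_nonneg x (by exact_mod_cast hr.ne'))]
    exact Int.emod_emod_of_dvd x dvd_rfl

lemma eq_of_modStar_add_eq {r : ℕ} {x a b : ℤ} (hab : |a - b| < r)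
    (h : modStar (x + a) r = modStar (x + b) r) : a = b := by
  have hr : 0 < r := by exact_mod_cast (abs_nonneg (a - b)).trans_lt hab
  have hmod : x + b ≡ x + a [ZMOD r] := by
    unfold Int.ModEq
    rw [← modStar_emod hr, ← h, modStar_emod hr]
  have hdvd : (r : ℤ) ∣ a - b := (Int.ModEq.add_left_cancel' x hmod).dvd
  exact sub_eq_zero.mp (Int.eq_zero_of_abs_lt_dvd hdvd hab)

lemma modStar_natCast_of_mem_Icc {r a : ℕ} (ha : a ∈ Icc 1 r) : modStar a r = a := by
  obtain ⟨ha1, har⟩ := mem_Icc.mp ha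
  unfold modStar
  rcases har.lt_or_eq with hlt | rfl
  · have hndvd : ¬ (r : ℤ) ∣ a := by exact_mod_cast Nat.not_dvd_of_pos_of_lt ha1 hlt
    rw [if_neg hndvd, ← Int.natCast_mod, Int.toNat_natCast, Nat.mod_eq_of_lt hlt]
  · simp

section theta

variable {q : ℤ} {r : ℕ} {A : Finset (ℕ × ℕ)}

lemma theta_zero (hA : ∀ p ∈ A, p.2 ∈ Icc 1 r) : theta 0 r A = A := by
  conv_rhs => rw [← image_id (s := A)]
  refine image_congr fun p hp => ?_
  simp [modStar_natCast_of_mem_Icc (hA p hp)]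

lemma image_fst_theta : (theta q r A).image Prod.fst = A.image Prod.fst := by
  simp [theta, image_image, Function.comp_def]

lemma mem_theta_of_mem {p : ℕ × ℕ} (hp : p ∈ A) : (p.1, modStar (p.2 + q) r) ∈ theta q r A :=
  mem_image_of_mem _ hp

lemma eq_modStar_of_mem_theta (hA : Set.InjOn Prod.fst (A : Set (ℕ × ℕ))) {p : ℕ × ℕ}
    (hp : p ∈ A) {b : ℕ} (hb : (p.1, b) ∈ theta q r A) : b = modStar (p.2 + q) r := by
  obtain ⟨p', hp', hp'b⟩ := mem_image.mp hb
  obtain ⟨hfst, hsnd⟩ := Prod.mk.inj hp'b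
  rw [← hsnd, hA hp' hp hfst]

end theta

section signedSets

variable {n k r : ℕ} {A : Finset (ℕ × ℕ)}

lemma injOn_fst_of_mem_signedSets (hA : A ∈ signedSets n k r) :
    Set.InjOn Prod.fst (A : Set (ℕ × ℕ)) := by
  simp only [signedSets, mem_filter] at hA
  exact card_image_iff.mp (hA.2.2.trans hA.2.1.symm)

lemma snd_mem_Icc_of_mem_signedSets (hA : A ∈ signedSets n k r) {p : ℕ × ℕ} (hp : p ∈ A) :
    p.2 ∈ Icc 1 r := by
  simp only [signedSets, mem_filter, mem_powerset] at hA
  exact (mem_product.mp (hA.1 hp)).2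

end signedSets

section families

variable {n k r i : ℕ} {𝒜 : Finset (Finset (ℕ × ℕ))} {C : Finset (ℕ × ℕ)}

lemma exists_of_mem_shiftedFam (h𝒜 : ∀ A ∈ 𝒜, ∀ p ∈ A, p.2 ∈ Icc 1 r)
    (hC : C ∈ shiftedFam 𝒜 r i) :
    ∃ A ∈ 𝒜, (1, i) ∈ A ∧ C = theta ((i : ℤ) - 1) r (A.erase (1, i)) := by
  unfold shiftedFam at hC
  split_ifs at hC with hi
  · subst hi
    obtain ⟨A, hA, rfl⟩ := mem_image.mp hC
    obtain ⟨hA, hA1⟩ := mem_filter.mp hA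
    refine ⟨A, hA, hA1, ?_⟩
    rw [Nat.cast_one, sub_self, theta_zero fun p hp => h𝒜 A hA p (mem_of_mem_erase hp)]
  · obtain ⟨C', hC', rfl⟩ := mem_image.mp hC
    obtain ⟨A, hA, rfl⟩ := mem_image.mp hC'
    obtain ⟨hA, hA1⟩ := mem_filter.mp hA
    exact ⟨A, hA, hA1, rfl⟩

lemma exists_disjoint_image_fst_of_mem_bFam (hC : C ∈ bFam n k r 𝒜) :
    ∃ A₀ ∈ 𝒜, (∀ p ∈ A₀, p.1 ≠ 1) ∧ Disjoint (C.image Prod.fst) (A₀.image Prod.fst) := by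
  rw [bFam, mem_filter, mShadow, mem_sup] at hC
  simp only [complFam, zeroFam, mem_image, mem_filter, mem_powersetCard] at hC
  obtain ⟨-, _, ⟨_, ⟨A₀, ⟨hA₀, hA₀1⟩, rfl⟩, rfl⟩, hsub, -⟩ := hC
  exact ⟨A₀, hA₀, hA₀1, disjoint_of_subset_left hsub sdiff_disjoint⟩

lemma disjoint_shiftedFam (h𝒜 : 𝒜 ⊆ signedSets n k r)
    (hint : ∀ A ∈ 𝒜, ∀ B ∈ 𝒜, (A ∩ B).Nonempty) {j : ℕ} (hi : i ∈ Icc 1 r) (hj : j ∈ Icc 1 r)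
    (hij : i ≠ j) :
    Disjoint (shiftedFam 𝒜 r i) (shiftedFam 𝒜 r j) := by
  have hsnd : ∀ A ∈ 𝒜, ∀ p ∈ A, p.2 ∈ Icc 1 r :=
    fun A hA _ => snd_mem_Icc_of_mem_signedSets (h𝒜 hA)
  refine disjoint_left.mpr fun C hCi hCj => ?_
  obtain ⟨A, hA, hiA, hCA⟩ := exists_of_mem_shiftedFam hsnd hCi
  obtain ⟨B, hB, hjB, rfl⟩ := exists_of_mem_shiftedFam hsnd hCj
  obtain ⟨p, hp⟩ := hint A hA B hB
  obtain ⟨hpA, hpB⟩ := mem_inter.mp hp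
  have hinjA := injOn_fst_of_mem_signedSets (h𝒜 hA)
  have hinjB := injOn_fst_of_mem_signedSets (h𝒜 hB)
  have hp1 : p.1 ≠ 1 := by
    intro h
    have hij' : ((1, i) : ℕ × ℕ) = (1, j) :=
      (hinjA hiA hpA h.symm).trans (hinjB hpB hjB h)
    exact hij (Prod.ext_iff.mp hij').2
  have hpA' : p ∈ A.erase (1, i) := mem_erase.mpr ⟨ne_of_apply_ne Prod.fst hp1, hpA⟩
  have hpB' : p ∈ B.erase (1, j) := mem_erase.mpr ⟨ne_of_apply_ne Prod.fst hp1, hpB⟩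
  have hmem := mem_theta_of_mem (q := (j : ℤ) - 1) (r := r) hpB'
  rw [hCA] at hmem
  have hshift := eq_modStar_of_mem_theta
    (hinjA.mono (coe_subset.mpr (erase_subset _ _))) hpA' hmem
  have hclose : |((i : ℤ) - 1) - ((j : ℤ) - 1)| < r := by
    rw [mem_Icc] at hi hj
    rw [abs_lt]
    omega
  have := eq_of_modStar_add_eq hclose hshift.symm
  omega

lemma disjoint_shiftedFam_bFam (h𝒜 : 𝒜 ⊆ signedSets n k r)
    (hint : ∀ A ∈ 𝒜, ∀ B ∈ 𝒜, (A ∩ B).Nonempty) :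
    Disjoint (shiftedFam 𝒜 r i) (bFam n k r 𝒜) := by
  refine disjoint_left.mpr fun C hC hCB => ?_
  obtain ⟨A, hA, -, rfl⟩ :=
    exists_of_mem_shiftedFam (fun A hA _ => snd_mem_Icc_of_mem_signedSets (h𝒜 hA)) hC
  obtain ⟨A₀, hA₀, hA₀1, hdisj⟩ := exists_disjoint_image_fst_of_mem_bFam hCB
  obtain ⟨p, hp⟩ := hint A hA A₀ hA₀
  obtain ⟨hpA, hpA₀⟩ := mem_inter.mp hp
  have hpA' : p ∈ A.erase (1, i) :=
    mem_erase.mpr ⟨ne_of_apply_ne Prod.fst (hA₀1 p hpA₀), hpA⟩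
  rw [image_fst_theta] at hdisj
  exact disjoint_left.mp hdisj (mem_image_of_mem _ hpA') (mem_image_of_mem _ hpA₀)

end families

theorem shifted_families_and_B_pairwise_disjoint_general (n k r : ℕ)
    (𝒜 : Finset (Finset (ℕ × ℕ))) (h𝒜 : 𝒜 ⊆ signedSets n k r)
    (hint : ∀ A ∈ 𝒜, ∀ B ∈ 𝒜, (A ∩ B).Nonempty) :
    (∀ i ∈ Finset.Icc 1 r, ∀ j ∈ Finset.Icc 1 r, i ≠ j →
      shiftedFam 𝒜 r i ∩ shiftedFam 𝒜 r j = ∅) ∧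
    (∀ i ∈ Finset.Icc 1 r, shiftedFam 𝒜 r i ∩ bFam n k r 𝒜 = ∅) :=
  ⟨fun _ hi _ hj hij => disjoint_iff_inter_eq_empty.mp (disjoint_shiftedFam h𝒜 hint hi hj hij),
    fun _ _ => disjoint_iff_inter_eq_empty.mp (disjoint_shiftedFam_bFam h𝒜 hint)⟩

theorem shifted_families_and_B_pairwise_disjoint (n k r : ℕ)
    (hr : 2 ≤ r) (hk : 1 ≤ k) (hkn : 2 * k ≤ n)
    (𝒜 : Finset (Finset (ℕ × ℕ))) (h𝒜 : 𝒜 ⊆ signedSets n k r)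
    (hint : ∀ A ∈ 𝒜, ∀ B ∈ 𝒜, (A ∩ B).Nonempty) :
    (∀ i ∈ Finset.Icc 1 r, ∀ j ∈ Finset.Icc 1 r, i ≠ j →
      shiftedFam 𝒜 r i ∩ shiftedFam 𝒜 r j = ∅) ∧
    (∀ i ∈ Finset.Icc 1 r, shiftedFam 𝒜 r i ∩ bFam n k r 𝒜 = ∅) :=
  shifted_families_and_B_pairwise_disjoint_general n k r 𝒜 h𝒜 hint
end
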